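/- Let B be a Banach space of holomorphic functions on a domain Ω ⊆ ℂ (dimension 1) with bounded, nonzero point evaluations which are linearly independent at distinct points. Let ψ be holomorphic with M_ψ bounded on B, φ a holomorphic self-map with C_φ bounded on B. If M_ψ C_φ is Fredholm on B, then ψ has at most finitely many zeros in Ω, and φ is injective. -/

import Mathlib

/-! The adjoint of `T = M_ψ C_φ` acts on point evaluations by `T* K_z = ψ z • K_{φ z}`, and the
`K_z` for distinct `z ∈ Ω` are linearly independent, so the adjoint kernel, being
finite-dimensional, can only contain finitely many independent combinations of them. An
infinite zero set of `ψ` would put infinitely many `K_z` into it. If `φ z₀ = φ w₀` with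
`z₀ ≠ w₀`, then `φ` is either constant or an open map on `Ω`; in both cases disjoint
neighbourhoods of `z₀` and `w₀` contain infinitely many disjoint pairs `z, w` with
`φ z = φ w` away from the zeros of `ψ`, and `ψ w • K_z - ψ z • K_w` lies in the adjoint
kernel. -/

/-- A bounded operator on a Banach space is Fredholm if it has closed range,
finite-dimensional kernel, and the kernel of its Banach adjoint is finite-dimensional. -/
def IsFredholm {B : Type*} [NormedAddCommGroup B] [NormedSpace ℂ B]
    (T : B →L[ℂ] B) : Prop :=
  IsClosed (Set.range T) ∧ FiniteDimensional ℂ (LinearMap.ker (T : B →ₗ[ℂ] B)) ∧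
    FiniteDimensional ℂ
      (LinearMap.ker ((ContinuousLinearMap.compL ℂ B B ℂ).flip T : (B →L[ℂ] ℂ) →ₗ[ℂ] (B →L[ℂ] ℂ)))

open Set Function

theorem linearIndepOn_of_forall_fin {R M α : Type*} [Semiring R] [AddCommMonoid M] [Module R M]
    {v : α → M} {s : Set α}
    (h : ∀ (m : ℕ) (a : Fin m → α), (∀ i, a i ∈ s) → Injective a →
      LinearIndependent R (fun i => v (a i))) :
    LinearIndepOn R v s := by
  rw [linearIndepOn_iff_linearIndepOn_finset]
  intro t hts
  let e : Fin t.card ≃ t := t.equivFin.symm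
  exact (linearIndependent_equiv e).mp
    (h _ (fun i => e i) (fun i => hts (e i).2) (Subtype.val_injective.comp e.injective))

theorem LinearIndependent.smul_inl_sub_smul_inr {R M ι : Type*} [Ring R] [NoZeroDivisors R]
    [AddCommGroup M] [Module R M] {u : ι ⊕ ι → M} (hu : LinearIndependent R u)
    (c d : ι → R) (hc : ∀ i, c i ≠ 0) :
    LinearIndependent R (fun i => c i • u (Sum.inl i) - d i • u (Sum.inr i)) := by
  rw [linearIndependent_iff'] at hu ⊢
  intro s t ht i hi
  have h := hu (s.disjSum s) (Sum.elim (fun i => t i * c i) (fun i => -(t i * d i))) ?_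
    (Sum.inl i) (by simpa using hi)
  · exact (mul_eq_zero.mp h).resolve_right (hc i)
  · rw [Finset.sum_disjSum, ← ht, ← Finset.sum_add_distrib]
    refine Finset.sum_congr rfl fun j _ => ?_
    simp only [Sum.elim_inl, Sum.elim_inr, mul_smul, neg_smul, sub_eq_add_neg, smul_add, smul_neg]

theorem Submodule.finite_of_linearIndependent_of_forall_mem {R M ι : Type*} [Ring R]
    [StrongRankCondition R] [AddCommGroup M] [Module R M] {p : Submodule R M} [Module.Finite R p]
    {v : ι → M} (hv : LinearIndependent R v) (hp : ∀ i, v i ∈ p) : Finite ι :=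
  (LinearIndependent.of_comp p.subtype (v := fun i => (⟨v i, hp i⟩ : p)) hv).finite

section Pairs

variable {X Y : Type*} {U V Z : Set X} {φ : X → Y}

theorem exists_injective_seqs_of_isOpen_image [TopologicalSpace Y] [T1Space Y] [PerfectSpace Y]
    (hU : IsOpen (φ '' U)) (hV : IsOpen (φ '' V)) (hUV : (φ '' U ∩ φ '' V).Nonempty)
    (hZ : Z.Finite) :
    ∃ z w : ℕ → X, Injective z ∧ Injective w ∧
      ∀ k, z k ∈ U \ Z ∧ w k ∈ V \ Z ∧ φ (z k) = φ (w k) := by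
  obtain ⟨v, hv⟩ := hUV
  have hS : ((φ '' U ∩ φ '' V) \ φ '' Z).Infinite :=
    (infinite_of_mem_nhds v ((hU.inter hV).mem_nhds hv)).sdiff (hZ.image φ)
  let f := hS.natEmbedding
  choose z hzU hz using fun k => (f k).2.1.1
  choose w hwV hw using fun k => (f k).2.1.2
  have hnotZ : ∀ k, ∀ x, φ x = f k → x ∉ Z := fun k x hx hxZ => (f k).2.2 ⟨x, hxZ, hx⟩
  refine ⟨z, w, fun a b h => f.injective ?_, fun a b h => f.injective ?_, fun k =>
    ⟨⟨hzU k, hnotZ k _ (hz k)⟩, ⟨hwV k, hnotZ k _ (hw k)⟩, (hz k).trans (hw k).symm⟩⟩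
  · ext; rw [← hz a, ← hz b, h]
  · ext; rw [← hw a, ← hw b, h]

theorem exists_injective_seqs_of_eqOn_const [TopologicalSpace X] [T1Space X] [PerfectSpace X]
    {c : Y} (hU : IsOpen U) (hV : IsOpen V) (hUne : U.Nonempty) (hVne : V.Nonempty) (hZ : Z.Finite)
    (hφU : ∀ z ∈ U, φ z = c) (hφV : ∀ z ∈ V, φ z = c) :
    ∃ z w : ℕ → X, Injective z ∧ Injective w ∧
      ∀ k, z k ∈ U \ Z ∧ w k ∈ V \ Z ∧ φ (z k) = φ (w k) := by
  have hinf : ∀ {W : Set X}, IsOpen W → W.Nonempty → (W \ Z).Infinite := fun hW ⟨x, hx⟩ =>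
    (infinite_of_mem_nhds x (hW.mem_nhds hx)).sdiff hZ
  let f := (hinf hU hUne).natEmbedding
  let g := (hinf hV hVne).natEmbedding
  exact ⟨fun k => f k, fun k => g k, Subtype.val_injective.comp f.injective,
    Subtype.val_injective.comp g.injective, fun k =>
      ⟨(f k).2, (g k).2, (hφU _ (f k).2.1).trans (hφV _ (g k).2.1).symm⟩⟩

end Pairs

theorem exists_injective_pairs_of_not_injOn {Ω Z : Set ℂ} {φ : ℂ → ℂ} (hΩ : IsOpen Ω)
    (hconn : IsPreconnected Ω) (hφ : DifferentiableOn ℂ φ Ω) (hZ : Z.Finite)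
    (hφinj : ¬ InjOn φ Ω) :
    ∃ z w : ℕ → ℂ, Injective (Sum.elim z w) ∧
      ∀ k, z k ∈ Ω \ Z ∧ w k ∈ Ω \ Z ∧ φ (z k) = φ (w k) := by
  obtain ⟨z₀, hz₀, w₀, hw₀, hφ₀, hne⟩ : ∃ z₀ ∈ Ω, ∃ w₀ ∈ Ω, φ z₀ = φ w₀ ∧ z₀ ≠ w₀ := by
    simpa [InjOn] using hφinj
  obtain ⟨U, V, hU, hV, hz₀U, hw₀V, hUV⟩ := t2_separation hne
  have hUΩ : IsOpen (Ω ∩ U) := hΩ.inter hU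
  have hVΩ : IsOpen (Ω ∩ V) := hΩ.inter hV
  obtain ⟨z, w, hz, hw, hzw⟩ : ∃ z w : ℕ → ℂ, Injective z ∧ Injective w ∧
      ∀ k, z k ∈ (Ω ∩ U) \ Z ∧ w k ∈ (Ω ∩ V) \ Z ∧ φ (z k) = φ (w k) := by
    rcases (hφ.analyticOnNhd hΩ).is_constant_or_isOpen hconn with ⟨c, hc⟩ | hopen
    · exact exists_injective_seqs_of_eqOn_const hUΩ hVΩ ⟨z₀, hz₀, hz₀U⟩ ⟨w₀, hw₀, hw₀V⟩ hZ
        (fun z hz => hc z hz.1) (fun z hz => hc z hz.1)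
    · exact exists_injective_seqs_of_isOpen_image (hopen _ inter_subset_left hUΩ)
        (hopen _ inter_subset_left hVΩ)
        ⟨φ z₀, ⟨z₀, ⟨hz₀, hz₀U⟩, rfl⟩, ⟨w₀, ⟨hw₀, hw₀V⟩, hφ₀.symm⟩⟩ hZ
  refine ⟨z, w, hz.sumElim hw fun a b => hUV.ne_of_mem (hzw a).1.1.2 (hzw b).2.1.1.2, fun k =>
    ⟨⟨(hzw k).1.1.1, (hzw k).1.2⟩, ⟨(hzw k).2.1.1.1, (hzw k).2.1.2⟩, (hzw k).2.2⟩⟩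

section AdjointKernel

variable {B : Type*} [NormedAddCommGroup B] [NormedSpace ℂ B] {T : B →L[ℂ] B}
  {K : ℂ → B →L[ℂ] ℂ} {Ω : Set ℂ} {ψ φ : ℂ → ℂ}

theorem mem_ker_compL_flip_iff {g : B →L[ℂ] ℂ} :
    g ∈ LinearMap.ker ((ContinuousLinearMap.compL ℂ B B ℂ).flip T :
      (B →L[ℂ] ℂ) →ₗ[ℂ] (B →L[ℂ] ℂ)) ↔ g.comp T = 0 :=
  Iff.rfl

variable [FiniteDimensional ℂ (LinearMap.ker ((ContinuousLinearMap.compL ℂ B B ℂ).flip T :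
      (B →L[ℂ] ℂ) →ₗ[ℂ] (B →L[ℂ] ℂ)))]
  (hK : LinearIndepOn ℂ K Ω) (hKT : ∀ z ∈ Ω, (K z).comp T = ψ z • K (φ z))
include hK hKT

theorem finite_zeros_of_comp_eq_smul : {z ∈ Ω | ψ z = 0}.Finite := by
  have hker : ∀ z ∈ {z ∈ Ω | ψ z = 0}, (K z).comp T = 0 := fun z hz => by
    ext f
    simp [hKT z hz.1, hz.2]
  have : Finite {z ∈ Ω | ψ z = 0} :=
    Submodule.finite_of_linearIndependent_of_forall_mem (hK.mono fun _ hz => hz.1)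
      fun z => (mem_ker_compL_flip_iff (T := T)).mpr (hker z z.2)
  exact Set.toFinite _

theorem finite_of_injective_pairs {ι : Type*} {z w : ι → ℂ} (hinj : Injective (Sum.elim z w))
    (hzw : ∀ i, z i ∈ Ω ∧ w i ∈ Ω ∧ φ (z i) = φ (w i)) (hψ : ∀ i, ψ (w i) ≠ 0) : Finite ι := by
  have hKzw : LinearIndependent ℂ (fun j => K (Sum.elim z w j)) := by
    have hmem : ∀ j, Sum.elim z w j ∈ Ω := by rintro (i | i) <;> simp [hzw]
    exact hK.comp (fun j => ⟨_, hmem j⟩) fun a b h => hinj (congrArg Subtype.val h)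
  refine Submodule.finite_of_linearIndependent_of_forall_mem
    (hKzw.smul_inl_sub_smul_inr (fun i => ψ (w i)) (fun i => ψ (z i)) hψ)
    fun i => (mem_ker_compL_flip_iff (T := T)).mpr ?_
  obtain ⟨hz, hw, hφ⟩ := hzw i
  rw [ContinuousLinearMap.sub_comp, ContinuousLinearMap.smul_comp,
    ContinuousLinearMap.smul_comp, Sum.elim_inl, Sum.elim_inr, hKT _ hz, hKT _ hw, hφ,
    smul_smul, smul_smul, mul_comm, sub_self]

end AdjointKernel

theorem stmt_15_general (Ω : Set ℂ) (hΩ : IsOpen Ω) (hconn : IsConnected Ω)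
    (B : Type*) [NormedAddCommGroup B] [NormedSpace ℂ B]
    (ev : B →ₗ[ℂ] (ℂ → ℂ))
    (K : ℂ → (B →L[ℂ] ℂ))
    (hK : ∀ z ∈ Ω, ∀ f : B, K z f = ev f z)
    (hsep : ∀ (m : ℕ) (a : Fin m → ℂ), (∀ i, a i ∈ Ω) →
      Function.Injective a → LinearIndependent ℂ (fun i => K (a i)))
    (ψ : ℂ → ℂ)
    (Mψ : B →L[ℂ] B) (hMψ : ∀ f : B, ∀ z ∈ Ω, ev (Mψ f) z = ψ z * ev f z)
    (φ : ℂ → ℂ) (hφΩ : Set.MapsTo φ Ω Ω) (hφHol : DifferentiableOn ℂ φ Ω)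
    (Cφ : B →L[ℂ] B) (hCφ : ∀ f : B, ∀ z ∈ Ω, ev (Cφ f) z = ev f (φ z))
    (hFred : IsFredholm (Mψ.comp Cφ)) :
    {z ∈ Ω | ψ z = 0}.Finite ∧ Set.InjOn φ Ω := by
  obtain ⟨-, -, hfin⟩ := hFred
  have hKli : LinearIndepOn ℂ K Ω := linearIndepOn_of_forall_fin hsep
  have hKT : ∀ z ∈ Ω, (K z).comp (Mψ.comp Cφ) = ψ z • K (φ z) := by
    intro z hz
    ext f
    simp [hK z hz, hK (φ z) (hφΩ hz), hMψ _ z hz, hCφ f z hz]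
  have hZ := finite_zeros_of_comp_eq_smul hKli hKT
  refine ⟨hZ, of_not_not fun hφinj => ?_⟩
  obtain ⟨z, w, hinj, hzw⟩ :=
    exists_injective_pairs_of_not_injOn hΩ hconn.isPreconnected hφHol hZ hφinj
  exact (finite_of_injective_pairs hKli hKT hinj
    (fun k => ⟨(hzw k).1.1, (hzw k).2.1.1, (hzw k).2.2⟩)
    fun k hψ => (hzw k).2.1.2 ⟨(hzw k).2.1.1, hψ⟩).false

/-- In dimension 1, if the weighted composition operator M_ψ C_φ is
Fredholm on a Banach space of holomorphic functions on Ω ⊆ ℂ with bounded, nonzero,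
linearly independent point evaluations, then ψ has at most finitely many zeros in Ω and
φ is injective on Ω. -/
theorem stmt_15 (Ω : Set ℂ) (hΩ : IsOpen Ω) (hconn : IsConnected Ω)
    (hbdd : Bornology.IsBounded Ω)
    (B : Type*) [NormedAddCommGroup B] [NormedSpace ℂ B] [CompleteSpace B]
    (ev : B →ₗ[ℂ] (ℂ → ℂ))
    (hHol : ∀ f : B, DifferentiableOn ℂ (ev f) Ω)
    (K : ℂ → (B →L[ℂ] ℂ))
    (hK : ∀ z ∈ Ω, ∀ f : B, K z f = ev f z)
    (hKne : ∀ z ∈ Ω, K z ≠ 0)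
    (hsep : ∀ (m : ℕ) (a : Fin m → ℂ), (∀ i, a i ∈ Ω) →
      Function.Injective a → LinearIndependent ℂ (fun i => K (a i)))
    (ψ : ℂ → ℂ) (hψHol : DifferentiableOn ℂ ψ Ω)
    (Mψ : B →L[ℂ] B) (hMψ : ∀ f : B, ∀ z ∈ Ω, ev (Mψ f) z = ψ z * ev f z)
    (φ : ℂ → ℂ) (hφΩ : Set.MapsTo φ Ω Ω) (hφHol : DifferentiableOn ℂ φ Ω)
    (Cφ : B →L[ℂ] B) (hCφ : ∀ f : B, ∀ z ∈ Ω, ev (Cφ f) z = ev f (φ z))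
    (hFred : IsFredholm (Mψ.comp Cφ)) :
    {z ∈ Ω | ψ z = 0}.Finite ∧ Set.InjOn φ Ω :=
  stmt_15_general Ω hΩ hconn B ev K hK hsep ψ Mψ hMψ φ hφΩ hφHol Cφ hCφ hFred
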